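/- arXiv:2009.06677 — 5 statements merged into one kernel-verified Lean document; each statement's English description precedes it below -/
import Mathlib

section
/- Let φ̂₁,…,φ̂ᵣ be a basis of an r-dimensional subspace Ê ⊆ V, and let μ̂₁,…,μ̂ᵣ be positive real numbers with μ̂ⱼ ∉ Spec(T)\Λ for each j. Let G be the r×r Gram matrix G_{ij} = B(φ̂ⱼ, φ̂ᵢ), let λ_min(G) be its smallest eigenvalue, and set C(Λ̂,Λ) = max{C(μ̂ⱼ,Λ) : 1 ≤ j ≤ r}. Then for every nonzero v̂ ∈ Ê, ‖(I−S)v̂‖_B² / ‖v̂‖_B² ≤ (C(Λ̂,Λ)² / λ_min(G)) · Σ_{j=1}^r ‖φ̂ⱼ − μ̂ⱼ T⁻¹ φ̂ⱼ‖_B². -/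
/-! Work in an orthonormal eigenbasis `(bᵢ)` of `T` with eigenvalues `ξᵢ > 0`. There
`‖w‖_B² = ∑ ξᵢ ⟪bᵢ, w⟫²`, the projection `I - S` keeps exactly the coordinates with `ξᵢ ∉ Λ`,
and `φ - μ T⁻¹ φ` has coordinates `(ξᵢ - μ) / ξᵢ * ⟪bᵢ, φ⟫`. Since `ξᵢ ≤ C(μ, Λ) |ξᵢ - μ|` for
`ξᵢ ∈ Spec(T) \ Λ`, this gives `‖(I - S) φ‖_B ≤ C(μ, Λ) ‖φ - μ T⁻¹ φ‖_B` coordinatewise.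
For `v̂ = ∑ cⱼ φ̂ⱼ`, Cauchy–Schwarz bounds `‖(I - S) v̂‖_B²` by `|c|² ∑ ‖(I - S) φ̂ⱼ‖_B²`, while
`‖v̂‖_B² = cᵀ G c ≥ λ_min(G) |c|²`. -/

open scoped RealInnerProductSpace

noncomputable section

variable {V : Type*} [NormedAddCommGroup V] [InnerProductSpace ℝ V]

/-- `Spec(T)`: the set of eigenvalues of `T`. -/
def specSet (T : V →ₗ[ℝ] V) : Set ℝ := {μ : ℝ | Module.End.HasEigenvalue T μ}

/-- `E(Λ)`: the sum of the eigenspaces of `T` corresponding to eigenvalues in `Λ`. -/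
def ESub (T : V →ₗ[ℝ] V) (Λ : Set ℝ) : Submodule ℝ V :=
  ⨆ μ ∈ Λ, Module.End.eigenspace T μ

/-- `C(μ̂, Λ) = max_{ξ ∈ (Spec(T)\Λ) ∪ {0}} ξ / |ξ - μ̂|`. -/
def Cconst (T : V →ₗ[ℝ] V) (Λ : Set ℝ) (μ : ℝ) : ℝ :=
  sSup ((fun ξ => ξ / |ξ - μ|) '' ((specSet T \ Λ) ∪ {0}))

/-- Squared energy norm `‖v‖_B² = B(v,v) = ⟪T v, v⟫`. -/
def enormSq (T : V →ₗ[ℝ] V) (v : V) : ℝ := ⟪T v, v⟫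

/-- Energy norm `‖v‖_B = B(v,v)^{1/2}`. -/
def enorm (T : V →ₗ[ℝ] V) (v : V) : ℝ := Real.sqrt ⟪T v, v⟫

/-- `S`: the orthogonal projection of `V` onto `E(Λ)`, as an endomorphism of `V`. -/
def Sproj [FiniteDimensional ℝ V] (T : V →ₗ[ℝ] V) (Λ : Set ℝ) : V →ₗ[ℝ] V :=
  (ESub T Λ).subtype ∘ₗ (ESub T Λ).orthogonalProjectionOnto.toLinearMap

open Module.End Matrix
open scoped MatrixOrder

section Cconst

variable [FiniteDimensional ℝ V] (T : V →ₗ[ℝ] V) (Λ : Set ℝ) (μ : ℝ)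

theorem bddAbove_Cconst_image : BddAbove ((fun ξ => ξ / |ξ - μ|) '' ((specSet T \ Λ) ∪ {0})) :=
  (((finite_hasEigenvalue T).sdiff.union (Set.finite_singleton 0)).image _).bddAbove

theorem Cconst_nonneg : 0 ≤ Cconst T Λ μ :=
  calc (0 : ℝ) = 0 / |0 - μ| := (zero_div _).symm
    _ ≤ Cconst T Λ μ := le_csSup (bddAbove_Cconst_image T Λ μ) ⟨0, Or.inr rfl, rfl⟩

variable {T Λ} in
theorem div_abs_sub_le_Cconst {ξ : ℝ} (hξ : ξ ∈ specSet T \ Λ) : ξ / |ξ - μ| ≤ Cconst T Λ μ :=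
  le_csSup (bddAbove_Cconst_image T Λ μ) ⟨ξ, Or.inl hξ, rfl⟩

end Cconst

section Eigenspace

variable {T : V →ₗ[ℝ] V} {Λ : Set ℝ} {ν : ℝ} {u : V}

theorem eigenspace_le_ESub (hν : ν ∈ Λ) : eigenspace T ν ≤ ESub T Λ :=
  le_iSup₂ (f := fun μ (_ : μ ∈ Λ) => eigenspace T μ) ν hν

theorem ESub_isOrtho_eigenspace (hT : T.IsSymmetric) (hν : ν ∉ Λ) :
    ESub T Λ ⟂ eigenspace T ν := by
  simp only [ESub, Submodule.isOrtho_iSup_left]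
  exact fun μ hμ => hT.orthogonalFamily_eigenspaces.isOrtho (ne_of_mem_of_not_mem hμ hν)

theorem inner_sub_smul_inv_of_mem_eigenspace (hT : T.IsSymmetric) {Tinv : V →ₗ[ℝ] V}
    (hTinv : ∀ v, T (Tinv v) = v) (hν : ν ≠ 0) (hu : u ∈ eigenspace T ν) (μ : ℝ) (w : V) :
    ⟪u, w - μ • Tinv w⟫ = (ν - μ) / ν * ⟪u, w⟫ := by
  have h : ⟪u, w⟫ = ν * ⟪u, Tinv w⟫ := by
    rw [← real_inner_smul_left, ← mem_eigenspace_iff.1 hu, hT, hTinv]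
  rw [inner_sub_right, real_inner_smul_right, h]
  field_simp

variable [FiniteDimensional ℝ V]

theorem inner_sub_Sproj_eq_zero (hν : ν ∈ Λ) (hu : u ∈ eigenspace T ν) (w : V) :
    ⟪u, w - Sproj T Λ w⟫ = 0 :=
  Submodule.inner_right_of_mem_orthogonal (eigenspace_le_ESub hν hu)
    (Submodule.sub_starProjection_mem_orthogonal w)

theorem inner_Sproj_eq_zero (hT : T.IsSymmetric) (hν : ν ∉ Λ) (hu : u ∈ eigenspace T ν)
    (w : V) : ⟪u, Sproj T Λ w⟫ = 0 :=
  (ESub_isOrtho_eigenspace hT hν).symm.inner_eq hu (Submodule.starProjection_apply_mem _ w)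

end Eigenspace

theorem LinearMap.IsSymmetric.isPositive_of_inner_pos {T : V →ₗ[ℝ] V} (hT : T.IsSymmetric)
    (hTpos : ∀ v : V, v ≠ 0 → 0 < ⟪T v, v⟫) : T.IsPositive := by
  refine ⟨hT, fun v => ?_⟩
  rcases eq_or_ne v 0 with rfl | hv
  · simp
  · exact (hTpos v hv).le

section Eigenbasis

variable [FiniteDimensional ℝ V] {T : V →ₗ[ℝ] V}

namespace LinearMap.IsSymmetric

theorem eigenvectorBasis_mem_eigenspace (hT : T.IsSymmetric) (i : Fin (Module.finrank ℝ V)) :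
    hT.eigenvectorBasis rfl i ∈ eigenspace T (hT.eigenvalues rfl i) :=
  (hT.hasEigenvector_eigenvectorBasis rfl i).1

theorem eigenvalues_pos (hT : T.IsSymmetric) (hTpos : ∀ v : V, v ≠ 0 → 0 < ⟪T v, v⟫)
    (i : Fin (Module.finrank ℝ V)) : 0 < hT.eigenvalues rfl i := by
  have h := hTpos _ ((hT.eigenvectorBasis rfl).orthonormal.ne_zero i)
  rwa [mem_eigenspace_iff.1 (hT.eigenvectorBasis_mem_eigenspace i), real_inner_smul_left,
    real_inner_self_eq_norm_sq, (hT.eigenvectorBasis rfl).orthonormal.1 i, one_pow,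
    mul_one] at h

end LinearMap.IsSymmetric

theorem enormSq_eq_sum_eigenvalues_mul_sq (hT : T.IsSymmetric) (w : V) :
    enormSq T w = ∑ i, hT.eigenvalues rfl i * ⟪hT.eigenvectorBasis rfl i, w⟫ ^ 2 := by
  rw [enormSq, ← (hT.eigenvectorBasis rfl).sum_inner_mul_inner]
  refine Finset.sum_congr rfl fun i _ => ?_
  rw [hT, mem_eigenspace_iff.1 (hT.eigenvectorBasis_mem_eigenspace i), real_inner_smul_right,
    real_inner_comm]
  ring

theorem enormSq_sum_smul_le (hT : T.IsPositive) {ι : Type*} (s : Finset ι) (c : ι → ℝ)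
    (w : ι → V) :
    enormSq T (∑ j ∈ s, c j • w j) ≤ (∑ j ∈ s, c j ^ 2) * ∑ j ∈ s, enormSq T (w j) := by
  set b := hT.isSymmetric.eigenvectorBasis rfl
  set ξ := hT.isSymmetric.eigenvalues rfl
  simp only [enormSq_eq_sum_eigenvalues_mul_sq hT.isSymmetric, inner_sum, real_inner_smul_right]
  calc ∑ i, ξ i * (∑ j ∈ s, c j * ⟪b i, w j⟫) ^ 2
      ≤ ∑ i, ξ i * ((∑ j ∈ s, c j ^ 2) * ∑ j ∈ s, ⟪b i, w j⟫ ^ 2) := by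
        gcongr with i
        · exact hT.nonneg_eigenvalues rfl i
        · exact Finset.sum_mul_sq_le_sq_mul_sq s c _
    _ = (∑ j ∈ s, c j ^ 2) * ∑ j ∈ s, ∑ i, ξ i * ⟪b i, w j⟫ ^ 2 := by
        simp only [Finset.mul_sum]
        rw [Finset.sum_comm]
        exact Finset.sum_congr rfl fun _ _ => Finset.sum_congr rfl fun _ _ => by ring

theorem enormSq_sub_Sproj_le (hT : T.IsSymmetric) (hTpos : ∀ v : V, v ≠ 0 → 0 < ⟪T v, v⟫)
    {Tinv : V →ₗ[ℝ] V} (hTinv : ∀ v, T (Tinv v) = v) (Λ : Set ℝ) {μ : ℝ}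
    (hμ : μ ∉ specSet T \ Λ) (φ : V) :
    enormSq T (φ - Sproj T Λ φ) ≤ Cconst T Λ μ ^ 2 * enormSq T (φ - μ • Tinv φ) := by
  simp only [enormSq_eq_sum_eigenvalues_mul_sq hT, Finset.mul_sum]
  refine Finset.sum_le_sum fun i _ => ?_
  set ξ := hT.eigenvalues rfl i
  set a := ⟪hT.eigenvectorBasis rfl i, φ⟫
  have hξ : 0 < ξ := hT.eigenvalues_pos hTpos i
  have hb := hT.eigenvectorBasis_mem_eigenspace i
  by_cases hΛ : ξ ∈ Λ
  · rw [inner_sub_Sproj_eq_zero hΛ hb, zero_pow two_ne_zero, mul_zero]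
    exact mul_nonneg (sq_nonneg _) (mul_nonneg hξ.le (sq_nonneg _))
  rw [inner_sub_right, inner_Sproj_eq_zero hT hΛ hb, sub_zero,
    inner_sub_smul_inv_of_mem_eigenspace hT hTinv hξ.ne' hb]
  have hspec : ξ ∈ specSet T \ Λ := ⟨hT.hasEigenvalue_eigenvalues rfl i, hΛ⟩
  have hne : ξ - μ ≠ 0 := sub_ne_zero.2 fun h => hμ (h ▸ hspec)
  have hC : ξ ^ 2 ≤ Cconst T Λ μ ^ 2 * (ξ - μ) ^ 2 := by
    have := pow_le_pow_left₀ (by positivity) (div_abs_sub_le_Cconst μ hspec) 2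
    rwa [div_pow, sq_abs, div_le_iff₀ (by positivity)] at this
  calc ξ * a ^ 2 = ξ ^ 2 * (a ^ 2 / ξ) := by field_simp
    _ ≤ Cconst T Λ μ ^ 2 * (ξ - μ) ^ 2 * (a ^ 2 / ξ) := by gcongr
    _ = Cconst T Λ μ ^ 2 * (ξ * ((ξ - μ) / ξ * a) ^ 2) := by field_simp

theorem enormSq_sum_smul_sub_Sproj_le (hT : T.IsSymmetric)
    (hTpos : ∀ v : V, v ≠ 0 → 0 < ⟪T v, v⟫) {Tinv : V →ₗ[ℝ] V} (hTinv : ∀ v, T (Tinv v) = v)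
    (Λ : Set ℝ) {ι : Type*} (s : Finset ι) (c : ι → ℝ) (φ : ι → V) {μ : ι → ℝ}
    (hμ : ∀ j ∈ s, μ j ∉ specSet T \ Λ) :
    enormSq T (∑ j ∈ s, c j • φ j - Sproj T Λ (∑ j ∈ s, c j • φ j))
      ≤ (∑ j ∈ s, c j ^ 2) *
        ∑ j ∈ s, Cconst T Λ (μ j) ^ 2 * enormSq T (φ j - μ j • Tinv (φ j)) := by
  simp only [map_sum, map_smul, ← Finset.sum_sub_distrib, ← smul_sub]
  refine (enormSq_sum_smul_le (hT.isPositive_of_inner_pos hTpos) s c _).trans ?_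
  gcongr with j hj
  exact enormSq_sub_Sproj_le hT hTpos hTinv Λ (hμ j hj) (φ j)

end Eigenbasis

section Gram

variable {T : V →ₗ[ℝ] V} {ι : Type*} [Fintype ι] {φ : ι → V} {G : Matrix ι ι ℝ}

theorem dotProduct_mulVec_eq_enormSq (hG : ∀ i j, G i j = ⟪T (φ j), φ i⟫) (x : ι → ℝ) :
    x ⬝ᵥ G *ᵥ x = enormSq T (∑ j, x j • φ j) := by
  simp only [enormSq, map_sum, map_smul, sum_inner, inner_sum, real_inner_smul_left,
    real_inner_smul_right, dotProduct, mulVec, hG, Finset.mul_sum]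
  exact Finset.sum_congr rfl fun j _ => Finset.sum_congr rfl fun i _ => by ring

theorem posDef_of_forall_apply_eq_inner (hT : T.IsSymmetric)
    (hTpos : ∀ v : V, v ≠ 0 → 0 < ⟪T v, v⟫) (hφ : LinearIndependent ℝ φ)
    (hG : ∀ i j, G i j = ⟪T (φ j), φ i⟫) : G.PosDef := by
  refine .of_dotProduct_mulVec_pos ?_ fun x hx => ?_
  · ext i j
    simp only [conjTranspose_apply, hG, star_trivial, hT (φ i), real_inner_comm]
  · rw [star_trivial, dotProduct_mulVec_eq_enormSq hG]
    exact hTpos _ fun h => hx (funext (Fintype.linearIndependent_iff.1 hφ x h))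

end Gram

theorem Matrix.IsHermitian.mul_dotProduct_self_le {n : Type*} [Fintype n] [DecidableEq n]
    {G : Matrix n n ℝ} (hG : G.IsHermitian) {lam : ℝ} (hlam : ∀ x ∈ spectrum ℝ G, lam ≤ x)
    (x : n → ℝ) : lam * (x ⬝ᵥ x) ≤ x ⬝ᵥ G *ᵥ x := by
  have h := le_iff.1 (algebraMap_le_of_le_spectrum hlam (a := G) hG.isSelfAdjoint)
  have := h.dotProduct_mulVec_nonneg x
  rwa [sub_mulVec, dotProduct_sub, Algebra.algebraMap_eq_smul_one, smul_mulVec, one_mulVec,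
    dotProduct_smul, star_trivial, smul_eq_mul, sub_nonneg] at this

theorem stmt_0_general [FiniteDimensional ℝ V]
    (T Tinv : V →ₗ[ℝ] V) (hTsymm : T.IsSymmetric)
    (hTpos : ∀ v : V, v ≠ 0 → 0 < ⟪T v, v⟫)
    (hTinv₁ : ∀ v, T (Tinv v) = v)
    (Λ : Set ℝ)
    (r : ℕ)
    (Ehat : Submodule ℝ V)
    (φ : Fin r → V) (hφli : LinearIndependent ℝ φ)
    (hφspan : Submodule.span ℝ (Set.range φ) = Ehat)
    (μ : Fin r → ℝ) (hμ : ∀ j, μ j ∉ specSet T \ Λ)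
    (G : Matrix (Fin r) (Fin r) ℝ) (hG : ∀ i j, G i j = ⟪T (φ j), φ i⟫)
    (lamMin : ℝ) (hlam₁ : lamMin ∈ spectrum ℝ G)
    (hlam₂ : ∀ x ∈ spectrum ℝ G, lamMin ≤ x)
    (CC : ℝ) (hCC : CC = ⨆ j : Fin r, Cconst T Λ (μ j))
    (v : V) (hv : v ∈ Ehat) (hv0 : v ≠ 0) :
    enormSq T (v - Sproj T Λ v) / enormSq T v
      ≤ CC ^ 2 / lamMin * ∑ j : Fin r, enormSq T (φ j - μ j • Tinv (φ j)) := by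
  have hT := hTsymm.isPositive_of_inner_pos hTpos
  have hGpos := posDef_of_forall_apply_eq_inner hTsymm hTpos hφli hG
  have hlam : 0 < lamMin := hGpos.isStrictlyPositive.spectrum_pos hlam₁
  obtain ⟨c, rfl⟩ := (Submodule.mem_span_range_iff_exists_fun ℝ).1 (hφspan ▸ hv)
  have hCle : ∀ j, Cconst T Λ (μ j) ≤ CC := fun j =>
    hCC ▸ le_ciSup (f := fun j => Cconst T Λ (μ j)) (Set.finite_range _).bddAbove j
  set R := ∑ j, enormSq T (φ j - μ j • Tinv (φ j))
  have hden : lamMin * ∑ j, c j ^ 2 ≤ enormSq T (∑ j, c j • φ j) := by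
    have hcc : ∑ j, c j ^ 2 = c ⬝ᵥ c := by simp only [dotProduct, sq]
    rw [hcc, ← dotProduct_mulVec_eq_enormSq hG]
    exact hGpos.isHermitian.mul_dotProduct_self_le hlam₂ c
  have hnum : enormSq T (∑ j, c j • φ j - Sproj T Λ (∑ j, c j • φ j))
      ≤ (∑ j, c j ^ 2) * (CC ^ 2 * R) := by
    refine (enormSq_sum_smul_sub_Sproj_le hTsymm hTpos hTinv₁ Λ _ c φ fun j _ => hμ j).trans ?_
    rw [Finset.mul_sum (a := CC ^ 2)]
    gcongr with j
    exacts [hT.inner_nonneg_left _, Cconst_nonneg T Λ (μ j), hCle j]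
  have hR : 0 ≤ CC ^ 2 / lamMin * R :=
    mul_nonneg (by positivity) (Finset.sum_nonneg fun j _ => hT.inner_nonneg_left _)
  rw [div_le_iff₀ (show 0 < enormSq T _ from hTpos _ hv0)]
  calc _ ≤ (∑ j, c j ^ 2) * (CC ^ 2 * R) := hnum
    _ = lamMin * (∑ j, c j ^ 2) * (CC ^ 2 / lamMin * R) := by field_simp
    _ ≤ enormSq T (∑ j, c j • φ j) * (CC ^ 2 / lamMin * R) := by gcongr
    _ = _ := mul_comm _ _

/-- Theorem 2.2, eigenvector error trace estimate (2.7):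
for every nonzero `v̂ ∈ Ê`,
`‖(I−S)v̂‖_B² / ‖v̂‖_B² ≤ (C(Λ̂,Λ)² / λ_min(G)) · Σ_j ‖φ̂ⱼ − μ̂ⱼ T⁻¹ φ̂ⱼ‖_B²`. -/
theorem stmt_0 [FiniteDimensional ℝ V]
    (T Tinv : V →ₗ[ℝ] V) (hTsymm : T.IsSymmetric)
    (hTpos : ∀ v : V, v ≠ 0 → 0 < ⟪T v, v⟫)
    (hTinv₁ : ∀ v, T (Tinv v) = v) (hTinv₂ : ∀ v, Tinv (T v) = v)
    (Λ : Set ℝ) (hΛ : Λ ⊆ specSet T)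
    (r : ℕ) (hr : 0 < r)
    (Ehat : Submodule ℝ V)
    (φ : Fin r → V) (hφli : LinearIndependent ℝ φ)
    (hφspan : Submodule.span ℝ (Set.range φ) = Ehat)
    (μ : Fin r → ℝ) (hμpos : ∀ j, 0 < μ j) (hμ : ∀ j, μ j ∉ specSet T \ Λ)
    (G : Matrix (Fin r) (Fin r) ℝ) (hG : ∀ i j, G i j = ⟪T (φ j), φ i⟫)
    (lamMin : ℝ) (hlam₁ : lamMin ∈ spectrum ℝ G)
    (hlam₂ : ∀ x ∈ spectrum ℝ G, lamMin ≤ x)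
    (CC : ℝ) (hCC : CC = ⨆ j : Fin r, Cconst T Λ (μ j))
    (v : V) (hv : v ∈ Ehat) (hv0 : v ≠ 0) :
    enormSq T (v - Sproj T Λ v) / enormSq T v
      ≤ CC ^ 2 / lamMin * ∑ j : Fin r, enormSq T (φ j - μ j • Tinv (φ j)) :=
  stmt_0_general T Tinv hTsymm hTpos hTinv₁ Λ r Ehat φ hφli hφspan μ hμ G hG lamMin hlam₁ hlam₂ CC
    hCC v hv hv0
end
end

section
/- Let K = Spec(H,G) and K̃ = Spec(H̃,G). Then the Hausdorff distance dist(K,K̃) = max{ max_{κ̃∈K̃} min_{κ∈K} |κ−κ̃| , max_{κ∈K} min_{κ̃∈K̃} |κ−κ̃| } satisfies dist(K,K̃) ≤ ‖G^{-1/2}‖₂² · ‖H − H̃‖₂. -/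
open Matrix

noncomputable section

/-- `Spec(H,G)`: the set of generalized eigenvalues of the pair `(H,G)`,
i.e. real `κ` with `H x = κ G x` for some nonzero `x`. -/
def genSpec {r : ℕ} (H G : Matrix (Fin r) (Fin r) ℝ) : Set ℝ :=
  {κ : ℝ | ∃ x : Fin r → ℝ, x ≠ 0 ∧ H.mulVec x = κ • G.mulVec x}

/-- The spectral norm `‖M‖₂`: the operator norm induced by the Euclidean vector norm. -/
def spectralNorm2 {r : ℕ} (M : Matrix (Fin r) (Fin r) ℝ) : ℝ :=
  ‖Matrix.toEuclideanCLM (𝕜 := ℝ) M‖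

/-- The Hausdorff distance
`dist(K,K̃) = max{ max_{κ̃∈K̃} min_{κ∈K} |κ−κ̃| , max_{κ∈K} min_{κ̃∈K̃} |κ−κ̃| }`. -/
def hausDist (K Kt : Set ℝ) : ℝ :=
  max (sSup ((fun κt => sInf ((fun κ => |κ - κt|) '' K)) '' Kt))
      (sSup ((fun κ => sInf ((fun κt => |κ - κt|) '' Kt)) '' K))

/-!
With `S = G^{-1/2}`, the substitution `x = S w` identifies `Spec(H,G)` with the ordinary
spectrum of the symmetric matrix `S H S`, and likewise `Spec(H̃,G)` with that of `S H̃ S`.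
Both halves of the Hausdorff distance are then bounded by the Bauer–Fike estimate for a
symmetric matrix `A`: if `B w = κ̃ w`, expanding `w` in an orthonormal eigenbasis of `A` gives
`min_{κ ∈ Spec A} |κ - κ̃| ‖w‖ ≤ ‖(A - κ̃) w‖ = ‖(A - B) w‖ ≤ ‖A - B‖₂ ‖w‖`,
and finally `‖S (H - H̃) S‖₂ ≤ ‖S‖₂² ‖H - H̃‖₂`.
-/

open Module.End

theorem LinearMap.IsSymmetric.exists_hasEigenvalue_abs_sub_mul_norm_le
    {𝕜 E : Type*} [RCLike 𝕜] [NormedAddCommGroup E] [InnerProductSpace 𝕜 E]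
    [FiniteDimensional 𝕜 E] [Nontrivial E] {T : E →ₗ[𝕜] E} (hT : T.IsSymmetric)
    (c : ℝ) (v : E) :
    ∃ μ : ℝ, HasEigenvalue T μ ∧ |μ - c| * ‖v‖ ≤ ‖T v - (c : 𝕜) • v‖ := by
  set n := Module.finrank 𝕜 E
  have : Nonempty (Fin n) := ⟨⟨0, Module.finrank_pos⟩⟩
  set b := hT.eigenvectorBasis rfl
  set μ := hT.eigenvalues (n := n) rfl
  obtain ⟨i, hi⟩ := Finite.exists_min (fun j => |μ j - c|)
  refine ⟨μ i, hT.hasEigenvalue_eigenvalues rfl i, ?_⟩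
  have hcoord : ∀ j, b.repr (T v - (c : 𝕜) • v) j = ((μ j - c : ℝ) : 𝕜) * b.repr v j := by
    intro j
    simp [b, μ, hT.eigenvectorBasis_apply_self_apply, sub_mul, RCLike.real_smul_eq_coe_mul]
  rw [← b.repr.norm_map v, ← b.repr.norm_map]
  refine (abs_le_of_sq_le_sq' ?_ (norm_nonneg _)).2
  simp only [mul_pow, EuclideanSpace.norm_sq_eq, hcoord, norm_mul, Finset.mul_sum,
    RCLike.norm_ofReal]
  refine Finset.sum_le_sum fun j _ => mul_le_mul_of_nonneg_right ?_ (by positivity)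
  exact pow_le_pow_left₀ (abs_nonneg _) (hi j) 2

section

variable {r : ℕ}

lemma hausDist_le {K Kt : Set ℝ} {ε : ℝ} (hε : 0 ≤ ε)
    (hK : ∀ κt ∈ Kt, ∃ κ ∈ K, |κ - κt| ≤ ε) (hKt : ∀ κ ∈ K, ∃ κt ∈ Kt, |κ - κt| ≤ ε) :
    hausDist K Kt ≤ ε := by
  have hbdd : ∀ (S : Set ℝ) (f : ℝ → ℝ), BddBelow ((fun x => |f x|) '' S) :=
    fun _ _ => ⟨0, Set.forall_mem_image.2 fun _ _ => abs_nonneg _⟩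
  refine max_le (Real.sSup_le (Set.forall_mem_image.2 fun κt hκt => ?_) hε)
    (Real.sSup_le (Set.forall_mem_image.2 fun κ hκ => ?_) hε)
  · obtain ⟨κ, hκ, h⟩ := hK κt hκt
    exact (csInf_le (hbdd _ _) (Set.mem_image_of_mem _ hκ)).trans h
  · obtain ⟨κt, hκt, h⟩ := hKt κ hκ
    exact (csInf_le (hbdd _ _) (Set.mem_image_of_mem _ hκt)).trans h

lemma genSpec_mul_mul {P Q H G : Matrix (Fin r) (Fin r) ℝ} (hP : IsUnit P) (hQ : IsUnit Q) :
    genSpec (P * H * Q) (P * G * Q) = genSpec H G := by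
  ext κ
  have hPsmul (y : Fin r → ℝ) : κ • P *ᵥ y = P *ᵥ (κ • y) := (mulVec_smul P κ y).symm
  simp only [genSpec, Set.mem_ofPred_eq, ← mulVec_mulVec, hPsmul,
    (mulVec_injective_iff_isUnit.2 hP).eq_iff]
  constructor
  · rintro ⟨x, hx, h⟩
    exact ⟨Q *ᵥ x, (mulVec_injective_iff_isUnit.2 hQ).ne_iff' (mulVec_zero Q) |>.2 hx, h⟩
  · rintro ⟨y, hy, h⟩
    obtain ⟨x, rfl⟩ := mulVec_surjective_iff_isUnit.2 hQ y
    exact ⟨x, by rintro rfl; simp at hy, h⟩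

lemma genSpec_eq_genSpec_mul_mul_one {S G H : Matrix (Fin r) (Fin r) ℝ} (hS : IsUnit S)
    (hSS : S * S = G⁻¹) : genSpec H G = genSpec (S * H * S) 1 := by
  have hG : IsUnit G.det :=
    isUnit_nonsing_inv_det_iff.1 ((isUnit_iff_isUnit_det _).1 (hSS ▸ hS.mul hS))
  have hSGS : S * G * S = 1 := hS.mul_right_cancel <| by
    rw [one_mul, mul_assoc, mul_assoc, hSS, mul_nonsing_inv _ hG, mul_one]
  rw [← hSGS, genSpec_mul_mul hS hS]

lemma mem_genSpec_one_of_hasEigenvalue {A : Matrix (Fin r) (Fin r) ℝ} {κ : ℝ}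
    (hκ : HasEigenvalue (toEuclideanLin A) κ) : κ ∈ genSpec A 1 := by
  obtain ⟨u, hu⟩ := hκ.exists_hasEigenvector
  refine ⟨u.ofLp, by simpa using hu.2, ?_⟩
  simpa using congrArg WithLp.ofLp (mem_eigenspace_iff.1 hu.1)

lemma spectralNorm2_nonneg (A : Matrix (Fin r) (Fin r) ℝ) : 0 ≤ spectralNorm2 A :=
  norm_nonneg _

lemma spectralNorm2_mul_le (A B : Matrix (Fin r) (Fin r) ℝ) :
    spectralNorm2 (A * B) ≤ spectralNorm2 A * spectralNorm2 B := by
  unfold spectralNorm2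
  rw [map_mul]
  exact norm_mul_le _ _

lemma spectralNorm2_sub_comm (A B : Matrix (Fin r) (Fin r) ℝ) :
    spectralNorm2 (A - B) = spectralNorm2 (B - A) := by
  unfold spectralNorm2
  rw [map_sub, map_sub, norm_sub_rev]

theorem Matrix.IsHermitian.exists_mem_genSpec_one_abs_sub_le {A B : Matrix (Fin r) (Fin r) ℝ}
    (hA : A.IsHermitian) {κt : ℝ} (hκt : κt ∈ genSpec B 1) :
    ∃ κ ∈ genSpec A 1, |κ - κt| ≤ spectralNorm2 (A - B) := by
  obtain ⟨w, hw, hBw⟩ := hκt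
  set v : EuclideanSpace ℝ (Fin r) := WithLp.toLp 2 w
  have hv : v ≠ 0 := by simpa [v] using hw
  have : Nontrivial (EuclideanSpace ℝ (Fin r)) := ⟨⟨v, 0, hv⟩⟩
  obtain ⟨κ, hκ, hle⟩ :=
    (isSymmetric_toEuclideanLin_iff.2 hA).exists_hasEigenvalue_abs_sub_mul_norm_le κt v
  have hres : toEuclideanLin A v - κt • v = toEuclideanCLM (𝕜 := ℝ) (A - B) v := by
    simp [v, hBw, toLpLin_toLp]
  refine ⟨κ, mem_genSpec_one_of_hasEigenvalue hκ, le_of_mul_le_mul_right ?_ (norm_pos_iff.2 hv)⟩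
  calc |κ - κt| * ‖v‖ ≤ ‖toEuclideanCLM (𝕜 := ℝ) (A - B) v‖ := hres ▸ hle
    _ ≤ spectralNorm2 (A - B) * ‖v‖ := (toEuclideanCLM (𝕜 := ℝ) (A - B)).le_opNorm v

theorem exists_mem_genSpec_abs_sub_le {G H Ht S : Matrix (Fin r) (Fin r) ℝ}
    (hH : H.IsHermitian) (hS : S.IsHermitian) (hSu : IsUnit S) (hSS : S * S = G⁻¹) {κt : ℝ}
    (hκt : κt ∈ genSpec Ht G) :
    ∃ κ ∈ genSpec H G, |κ - κt| ≤ spectralNorm2 S ^ 2 * spectralNorm2 (H - Ht) := by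
  rw [genSpec_eq_genSpec_mul_mul_one hSu hSS] at hκt ⊢
  have hSHS : (S * H * S).IsHermitian := by
    simpa only [hS.eq] using isHermitian_mul_mul_conjTranspose S hH
  obtain ⟨κ, hκ, hle⟩ := hSHS.exists_mem_genSpec_one_abs_sub_le hκt
  refine ⟨κ, hκ, hle.trans ?_⟩
  calc spectralNorm2 (S * H * S - S * Ht * S) = spectralNorm2 (S * (H - Ht) * S) := by
        rw [mul_sub, sub_mul]
    _ ≤ spectralNorm2 S * spectralNorm2 (H - Ht) * spectralNorm2 S :=
        (spectralNorm2_mul_le _ _).trans <|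
          mul_le_mul_of_nonneg_right (spectralNorm2_mul_le _ _) (spectralNorm2_nonneg _)
    _ = spectralNorm2 S ^ 2 * spectralNorm2 (H - Ht) := by ring

end

theorem stmt_4_general {r : ℕ} (G H Ht : Matrix (Fin r) (Fin r) ℝ)
    (hH : H.PosSemidef) (hHt : Ht.PosSemidef)
    (Gis : Matrix (Fin r) (Fin r) ℝ) (hGis : Gis.PosDef) (hGisSq : Gis * Gis = G⁻¹) :
    hausDist (genSpec H G) (genSpec Ht G)
      ≤ spectralNorm2 Gis ^ 2 * spectralNorm2 (H - Ht) := by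
  refine hausDist_le (mul_nonneg (sq_nonneg _) (spectralNorm2_nonneg _))
    (fun κt hκt => exists_mem_genSpec_abs_sub_le hH.isHermitian hGis.isHermitian
      hGis.isUnit hGisSq hκt) (fun κ hκ => ?_)
  obtain ⟨κt, hκt, hle⟩ := exists_mem_genSpec_abs_sub_le hHt.isHermitian hGis.isHermitian
    hGis.isUnit hGisSq hκ
  exact ⟨κt, hκt, by rwa [abs_sub_comm, spectralNorm2_sub_comm]⟩

/-- estimate (2.13), Hausdorff-distance form of Bauer–Fike:
with `K = Spec(H,G)` and `K̃ = Spec(H̃,G)`,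
`dist(K,K̃) ≤ ‖G^{-1/2}‖₂² · ‖H − H̃‖₂`. -/
theorem stmt_4 {r : ℕ} (G H Ht : Matrix (Fin r) (Fin r) ℝ)
    (hG : G.PosDef) (hH : H.PosSemidef) (hHt : Ht.PosSemidef)
    (Gis : Matrix (Fin r) (Fin r) ℝ) (hGis : Gis.PosDef) (hGisSq : Gis * Gis = G⁻¹) :
    hausDist (genSpec H G) (genSpec Ht G)
      ≤ spectralNorm2 Gis ^ 2 * spectralNorm2 (H - Ht) :=
  stmt_4_general G H Ht hH hHt Gis hGis hGisSq
end
end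

section
/- Let T' = T ∘ (I−S), and let μ̂ > 0 with μ̂ ∉ Spec(T)\Λ. Then the operator μ̂·I − T' is invertible, and for every φ̂ ∈ V, (I−S)φ̂ = −(μ̂·I − T')⁻¹ ∘ T ∘ (I−S) (φ̂ − μ̂ T⁻¹ φ̂). -/
/-! Since `T` is symmetric and `E(Λ)` is `T`-invariant, so is `E(Λ)ᗮ`; hence `S` commutes with `T`.
Everything else is algebra with `S² = S` and `ST = TS`. If `(μ̂ − T(I−S))v = 0`, then
`μ̂ Sv = T S(I−S)v = 0`, so `v ∈ E(Λ)ᗮ` is a `μ̂`-eigenvector of `T`, which `μ̂ ∉ Spec(T) \ Λ`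
rules out unless `v = 0`. And
`(μ̂ − T(I−S))(I−S)φ̂ = μ̂(I−S)φ̂ − T(I−S)φ̂ = −T(I−S)(φ̂ − μ̂T⁻¹φ̂)`. -/

open scoped RealInnerProductSpace

noncomputable section

variable {V : Type*} [NormedAddCommGroup V] [InnerProductSpace ℝ V]

section

variable {K M : Type*} [Field K] [AddCommGroup M] [Module K M]
  {T P : Module.End K M} {μ : K}

theorem injective_smul_one_sub_mul_one_sub (hP : IsIdempotentElem P) (hPT : Commute P T)
    (hμ : μ ≠ 0) (heig : ∀ v ∈ LinearMap.ker P, T v = μ • v → v = 0) :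
    Function.Injective (μ • 1 - T * (1 - P) : Module.End K M) := by
  rw [← LinearMap.ker_eq_bot, Submodule.eq_bot_iff]
  intro v hv
  have hv : μ • v = T (v - P v) := by simpa [sub_eq_zero] using hv
  have hPv : P v = 0 := by
    have : μ • P v = T (P v - P (P v)) := by
      rw [← map_smul, hv, ← Module.End.mul_apply P T, hPT.eq, Module.End.mul_apply, map_sub]
    rw [show P (P v) = P v from LinearMap.congr_fun hP.eq v, sub_self, map_zero] at this
    exact (smul_eq_zero.mp this).resolve_left hμ
  exact heig v hPv (by rw [hv, hPv, sub_zero])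

theorem sub_apply_eq_neg_symm_apply (hP : IsIdempotentElem P) (hPT : Commute P T)
    {Tinv : Module.End K M} (hTinv : ∀ v, T (Tinv v) = v)
    (e : M ≃ₗ[K] M) (he : (e : Module.End K M) = μ • 1 - T * (1 - P)) (φ : M) :
    φ - P φ = -e.symm (T ((φ - μ • Tinv φ) - P (φ - μ • Tinv φ))) := by
  rw [← map_neg, eq_comm, LinearEquiv.symm_apply_eq, ← LinearEquiv.coe_coe, he]
  have hPP : P (P φ) = P φ := LinearMap.congr_fun hP.eq φ
  have hTP : T (P (Tinv φ)) = P φ := by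
    rw [← Module.End.mul_apply, ← hPT.eq, Module.End.mul_apply, hTinv]
  simp only [LinearMap.sub_apply, LinearMap.smul_apply, Module.End.mul_apply,
    Module.End.one_apply, map_sub, map_smul, hPP, hTinv, hTP]
  module

end

theorem LinearMap.IsSymmetric.commute_starProjection {𝕜 E : Type*} [RCLike 𝕜]
    [NormedAddCommGroup E] [InnerProductSpace 𝕜 E] {T : E →ₗ[𝕜] E} (hT : T.IsSymmetric)
    {U : Submodule 𝕜 E} [U.HasOrthogonalProjection] (hU : U ∈ Module.End.invtSubmodule T) :
    Commute (U.starProjection : E →ₗ[𝕜] E) T :=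
  (LinearMap.IsIdempotentElem.commute_iff
      (ContinuousLinearMap.IsIdempotentElem.toLinearMap U.isIdempotentElem_starProjection)).mpr
    ⟨by simpa using hU, by simpa using hT.orthogonalComplement_mem_invtSubmodule hU⟩

theorem eigenspace_le_ESub_s7 {T : V →ₗ[ℝ] V} {Λ : Set ℝ} {μ : ℝ} (hμ : μ ∈ Λ) :
    Module.End.eigenspace T μ ≤ ESub T Λ :=
  le_iSup₂ (f := fun μ (_ : μ ∈ Λ) => Module.End.eigenspace T μ) μ hμ

theorem ESub_mem_invtSubmodule (T : V →ₗ[ℝ] V) (Λ : Set ℝ) :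
    ESub T Λ ∈ Module.End.invtSubmodule T :=
  iSup₂_le fun _ hμ => (Module.End.eigenspace_mem_invtSubmodule T _).trans
    (Submodule.comap_mono (eigenspace_le_ESub_s7 hμ))

theorem eq_zero_of_mem_orthogonal_ESub {T : V →ₗ[ℝ] V} {Λ : Set ℝ} {μ : ℝ}
    (hμ : μ ∉ specSet T \ Λ) {v : V} (hv : v ∈ (ESub T Λ)ᗮ) (hTv : T v = μ • v) : v = 0 := by
  have hvμ : v ∈ Module.End.eigenspace T μ := Module.End.mem_eigenspace_iff.mpr hTv
  by_contra hv0
  have hμΛ : μ ∈ Λ := by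
    by_contra hμΛ
    exact hμ ⟨Module.End.hasEigenvalue_of_hasEigenvector ⟨hvμ, hv0⟩, hμΛ⟩
  exact hv0 <| Submodule.disjoint_def.mp (ESub T Λ).orthogonal_disjoint v
    (eigenspace_le_ESub_s7 hμΛ hvμ) hv

section

variable [FiniteDimensional ℝ V]

theorem isIdempotentElem_Sproj (T : V →ₗ[ℝ] V) (Λ : Set ℝ) : IsIdempotentElem (Sproj T Λ) :=
  ContinuousLinearMap.IsIdempotentElem.toLinearMap (ESub T Λ).isIdempotentElem_starProjection

theorem ker_Sproj (T : V →ₗ[ℝ] V) (Λ : Set ℝ) : LinearMap.ker (Sproj T Λ) = (ESub T Λ)ᗮ :=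
  (ESub T Λ).ker_starProjection

theorem commute_Sproj {T : V →ₗ[ℝ] V} (hT : T.IsSymmetric) (Λ : Set ℝ) : Commute (Sproj T Λ) T :=
  LinearMap.IsSymmetric.commute_starProjection hT (ESub_mem_invtSubmodule T Λ)

end

theorem stmt_7_general [FiniteDimensional ℝ V]
    (T Tinv : V →ₗ[ℝ] V) (hTsymm : T.IsSymmetric)
    (hTinv₁ : ∀ v, T (Tinv v) = v)
    (Λ : Set ℝ)
    (μ : ℝ) (hμpos : 0 < μ) (hμ : μ ∉ specSet T \ Λ)
    (T' : V →ₗ[ℝ] V) (hT' : T' = T ∘ₗ (LinearMap.id - Sproj T Λ)) :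
    Function.Bijective (μ • (LinearMap.id : V →ₗ[ℝ] V) - T') ∧
      ∀ e : V ≃ₗ[ℝ] V, (e : V →ₗ[ℝ] V) = μ • (LinearMap.id : V →ₗ[ℝ] V) - T' →
        ∀ φ : V, φ - Sproj T Λ φ =
          - e.symm (T ((φ - μ • Tinv φ) - Sproj T Λ (φ - μ • Tinv φ))) := by
  subst hT'
  have hS := isIdempotentElem_Sproj T Λ
  have hST := commute_Sproj hTsymm Λ
  have hinj :
      Function.Injective (μ • LinearMap.id - T ∘ₗ (LinearMap.id - Sproj T Λ) : V →ₗ[ℝ] V) :=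
    injective_smul_one_sub_mul_one_sub hS hST hμpos.ne' fun v hv =>
      eq_zero_of_mem_orthogonal_ESub hμ (ker_Sproj T Λ ▸ hv)
  exact ⟨⟨hinj, LinearMap.injective_iff_surjective.mp hinj⟩,
    fun e he => sub_apply_eq_neg_symm_apply hS hST hTinv₁ e he⟩

/-- key identity (2.2): with `T' = T ∘ (I−S)` and `μ̂ ∉ Spec(T)\Λ`,
`μ̂·I − T'` is invertible and for every `φ̂ ∈ V`,
`(I−S)φ̂ = −(μ̂·I − T')⁻¹ ∘ T ∘ (I−S) (φ̂ − μ̂ T⁻¹ φ̂)`. -/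
theorem stmt_7 [FiniteDimensional ℝ V]
    (T Tinv : V →ₗ[ℝ] V) (hTsymm : T.IsSymmetric)
    (hTpos : ∀ v : V, v ≠ 0 → 0 < ⟪T v, v⟫)
    (hTinv₁ : ∀ v, T (Tinv v) = v) (hTinv₂ : ∀ v, Tinv (T v) = v)
    (Λ : Set ℝ) (hΛ : Λ ⊆ specSet T)
    (μ : ℝ) (hμpos : 0 < μ) (hμ : μ ∉ specSet T \ Λ)
    (T' : V →ₗ[ℝ] V) (hT' : T' = T ∘ₗ (LinearMap.id - Sproj T Λ)) :
    Function.Bijective (μ • (LinearMap.id : V →ₗ[ℝ] V) - T') ∧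
      ∀ e : V ≃ₗ[ℝ] V, (e : V →ₗ[ℝ] V) = μ • (LinearMap.id : V →ₗ[ℝ] V) - T' →
        ∀ φ : V, φ - Sproj T Λ φ =
          - e.symm (T ((φ - μ • Tinv φ) - Sproj T Λ (φ - μ • Tinv φ))) :=
  stmt_7_general T Tinv hTsymm hTinv₁ Λ μ hμpos hμ T' hT'
end
end

section
/- Let φ₁,…,φᵣ ∈ V be orthonormal eigenvectors of T with Tφⱼ = μⱼφⱼ, let S be the orthogonal projection onto span{φ₁,…,φᵣ}, and let φ̂₁,…,φ̂ᵣ ∈ V satisfy ⟨φ̂ᵢ, φ̂ⱼ⟩ = δ_{ij} and ⟨Tφ̂ᵢ, φ̂ⱼ⟩ = μ̂ᵢ δ_{ij}. Then Σ_{i=1}^r ⟨T(I−S)φ̂ᵢ, (I−S)φ̂ᵢ⟩ ≥ Σ_{i=1}^r μ̂ᵢ − Σ_{j=1}^r μⱼ. -/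
/-!
Write `Sx = Σⱼ ⟪φⱼ, x⟫ φⱼ`. The span of the `φⱼ` is `T`-invariant and `T` is symmetric, so the
energy splits orthogonally and the `i`-th term of the sum equals `μ̂ᵢ - Σⱼ μⱼ ⟪φⱼ, φ̂ᵢ⟫²`.
Summing over `i`, Bessel's inequality for the orthonormal `φ̂ᵢ` gives `Σᵢ ⟪φⱼ, φ̂ᵢ⟫² ≤ 1`, and the
eigenvalues `μⱼ` are positive, so the subtracted double sum is at most `Σⱼ μⱼ`.
-/

open scoped RealInnerProductSpace
open Submodule

theorem Orthonormal.starProjection_span_range_apply {𝕜 E ι : Type*} [RCLike 𝕜]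
    [NormedAddCommGroup E] [InnerProductSpace 𝕜 E] [Fintype ι] {v : ι → E}
    (hv : Orthonormal 𝕜 v) [(span 𝕜 (Set.range v)).HasOrthogonalProjection] (x : E) :
    (span 𝕜 (Set.range v)).starProjection x = ∑ i, inner 𝕜 (v i) x • v i := by
  let e := Module.Basis.span hv.linearIndependent
  have he : ⇑e = fun i => ⟨v i, subset_span (Set.mem_range_self i)⟩ :=
    funext (Module.Basis.span_apply _)
  let b : OrthonormalBasis ι 𝕜 (span 𝕜 (Set.range v)) :=
    OrthonormalBasis.mk (he ▸ orthonormal_span hv) e.span_eq.ge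
  have hb : ∀ i, (b i : E) = v i := fun i => by simp [b, he]
  simp [starProjection_apply, b.orthogonalProjectionOnto_apply_eq_sum, hb]

section SymmetricOperator

variable {V : Type*} [NormedAddCommGroup V] [InnerProductSpace ℝ V] {T : V →ₗ[ℝ] V}

theorem LinearMap.IsSymmetric.inner_map_sub_starProjection (hT : T.IsSymmetric)
    {K : Submodule ℝ V} [K.HasOrthogonalProjection] (hK : ∀ y ∈ K, T y ∈ K) (x : V) :
    ⟪T (x - K.starProjection x), x - K.starProjection x⟫
      = ⟪T x, x⟫ - ⟪T (K.starProjection x), K.starProjection x⟫ := by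
  set p := K.starProjection x
  have hp : p ∈ K := K.starProjection_apply_mem x
  have hq : x - p ∈ Kᗮ := K.sub_starProjection_mem_orthogonal x
  have h₁ : ⟪T p, x - p⟫ = 0 := inner_right_of_mem_orthogonal (hK p hp) hq
  have h₂ : ⟪T (x - p), p⟫ = 0 := by rw [hT]; exact inner_left_of_mem_orthogonal (hK p hp) hq
  rw [inner_sub_right] at h₁
  rw [map_sub, inner_sub_left] at h₂
  rw [map_sub, inner_sub_left, inner_sub_right, inner_sub_right]
  linarith

theorem map_mem_span_range_of_eigenvectors {ι : Type*} {v : ι → V} {μ : ι → ℝ}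
    (hv : ∀ j, T (v j) = μ j • v j) {y : V} (hy : y ∈ span ℝ (Set.range v)) :
    T y ∈ span ℝ (Set.range v) := by
  have hle : span ℝ (Set.range v) ≤ (span ℝ (Set.range v)).comap T :=
    span_le.mpr <| Set.range_subset_iff.mpr fun j => by
      simpa [hv j] using smul_mem _ (μ j) (subset_span (Set.mem_range_self j))
  exact hle hy

theorem inner_map_sum_smul_of_eigenvectors {ι : Type*} [Fintype ι] {v : ι → V} {μ : ι → ℝ}
    (hv : Orthonormal ℝ v) (hTv : ∀ j, T (v j) = μ j • v j) (c : ι → ℝ) :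
    ⟪T (∑ j, c j • v j), ∑ j, c j • v j⟫ = ∑ j, μ j * c j ^ 2 := by
  have : T (∑ j, c j • v j) = ∑ j, (μ j * c j) • v j := by
    simp [map_sum, hTv, smul_smul, mul_comm]
  rw [this, hv.inner_sum]
  exact Finset.sum_congr rfl fun j _ => by simp only [conj_trivial]; ring

theorem eigenvalue_pos_of_inner_pos (hTpos : ∀ v : V, v ≠ 0 → 0 < ⟪T v, v⟫) {v : V} {μ : ℝ}
    (hv : ‖v‖ = 1) (hTv : T v = μ • v) : 0 < μ := by
  have hv0 : v ≠ 0 := by rintro rfl; simp at hv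
  simpa [hTv, real_inner_smul_left, real_inner_self_eq_norm_sq, hv] using hTpos v hv0

end SymmetricOperator

theorem Orthonormal.sum_sum_mul_inner_sq_le {V ι κ : Type*} [NormedAddCommGroup V]
    [InnerProductSpace ℝ V] [Fintype ι] [Fintype κ] {φ : ι → V} (hφ : Orthonormal ℝ φ)
    {u : κ → V} (hu : ∀ j, ‖u j‖ ≤ 1) {w : κ → ℝ} (hw : ∀ j, 0 ≤ w j) :
    ∑ i, ∑ j, w j * ⟪u j, φ i⟫ ^ 2 ≤ ∑ j, w j := by
  rw [Finset.sum_comm]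
  refine Finset.sum_le_sum fun j _ => ?_
  have hbessel : ∑ i, ⟪u j, φ i⟫ ^ 2 ≤ 1 := by
    calc ∑ i, ⟪u j, φ i⟫ ^ 2 = ∑ i, ‖⟪φ i, u j⟫‖ ^ 2 := by simp [real_inner_comm]
      _ ≤ ‖u j‖ ^ 2 := hφ.sum_inner_products_le (u j)
      _ ≤ 1 := pow_le_one₀ (norm_nonneg _) (hu j)
  rw [← Finset.mul_sum]
  exact mul_le_of_le_one_right (hw j) hbessel

/-- key inequality in the proof of (2.9): for orthonormal
eigenvectors `φ₁,…,φᵣ` of `T` with `Tφⱼ = μⱼφⱼ`, `S` the orthogonal projection onto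
their span, and `φ̂₁,…,φ̂ᵣ` with `⟨φ̂ᵢ, φ̂ⱼ⟩ = δ_{ij}` and `⟨Tφ̂ᵢ, φ̂ⱼ⟩ = μ̂ᵢ δ_{ij}`,
`Σᵢ ⟨T(I−S)φ̂ᵢ, (I−S)φ̂ᵢ⟩ ≥ Σᵢ μ̂ᵢ − Σⱼ μⱼ`. -/
theorem stmt_13 {V : Type*} [NormedAddCommGroup V] [InnerProductSpace ℝ V]
    [FiniteDimensional ℝ V]
    (T : V →ₗ[ℝ] V) (hTsymm : T.IsSymmetric)
    (hTpos : ∀ v : V, v ≠ 0 → 0 < ⟪T v, v⟫)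
    (r : ℕ) (φt : Fin r → V) (μt : Fin r → ℝ)
    (hON : Orthonormal ℝ φt)
    (heig : ∀ j, T (φt j) = μt j • φt j)
    (S : V →ₗ[ℝ] V)
    (hS : S = (Submodule.span ℝ (Set.range φt)).subtype ∘ₗ
      (Submodule.orthogonalProjectionOnto (Submodule.span ℝ (Set.range φt))).toLinearMap)
    (φ : Fin r → V) (μ : Fin r → ℝ)
    (hφON : ∀ i j, ⟪φ i, φ j⟫ = if i = j then (1 : ℝ) else 0)
    (hφB : ∀ i j, ⟪T (φ i), φ j⟫ = if i = j then μ i else 0) :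
    ∑ i : Fin r, μ i - ∑ j : Fin r, μt j
      ≤ ∑ i : Fin r, ⟪T (φ i - S (φ i)), φ i - S (φ i)⟫ := by
  set K := span ℝ (Set.range φt)
  have hSK : ∀ x, S x = K.starProjection x := fun x => by rw [hS]; rfl
  have hterm : ∀ i, ⟪T (φ i - S (φ i)), φ i - S (φ i)⟫
      = μ i - ∑ j, μt j * ⟪φt j, φ i⟫ ^ 2 := fun i => by
    rw [hSK, hTsymm.inner_map_sub_starProjection
        (fun _ => map_mem_span_range_of_eigenvectors heig),
      hON.starProjection_span_range_apply, inner_map_sum_smul_of_eigenvectors hON heig,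
      hφB i i, if_pos rfl]
  have hbound := (orthonormal_iff_ite.mpr hφON).sum_sum_mul_inner_sq_le (fun j => (hON.1 j).le)
    (fun j => (eigenvalue_pos_of_inner_pos hTpos (hON.1 j) (heig j)).le)
  rw [Finset.sum_congr rfl fun i _ => hterm i, Finset.sum_sub_distrib]
  linarith
end

section
/- Let E and Ê be r-dimensional subspaces of a finite-dimensional real inner product space V, let S be the orthogonal projection onto E, let φ̂₁,…,φ̂ᵣ be a basis of Ê, and define the Gram matrices G_{ij} = ⟨φ̂ⱼ, φ̂ᵢ⟩ and H_{ij} = ⟨(I−S)φ̂ⱼ, (I−S)φ̂ᵢ⟩. If λ_max(G⁻¹H) < 1, then gap(E,Ê) := max{ sup_{v̂∈Ê, v̂≠0} inf_{v∈E} ‖v−v̂‖/‖v̂‖ , sup_{v∈E, v≠0} inf_{v̂∈Ê} ‖v−v̂‖/‖v‖ } = √(λ_max(G⁻¹H)). -/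
/-!
Let `L = (I - S)|_Ê`. The pencil `Hx = κGx` is the matrix of `L* L` in the basis `φ̂`, so
`λ_max` is the top eigenvalue of `L* L` and `√λ_max = max_{v̂ ∈ Ê} ‖(I - S) v̂‖ / ‖v̂‖`, which is
`δ(Ê, E)` because `S v̂` is the point of `E` nearest to `v̂`. Conversely, `√λ_max < 1` makes `S`
injective on `Ê`, hence onto `E` as the dimensions agree; for `u = S ŵ` the multiple of `ŵ`
nearest to `u` is at distance `‖u‖ ‖ŵ - u‖ / ‖ŵ‖ ≤ √λ_max ‖u‖`, so `δ(E, Ê) ≤ δ(Ê, E)`.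
-/

open scoped RealInnerProductSpace
open Matrix

noncomputable section

/-- The directional gap `δ(A,B) = sup_{w∈A, w≠0} inf_{v∈B} ‖v−w‖/‖w‖`. -/
def dirGap {V : Type*} [NormedAddCommGroup V] [InnerProductSpace ℝ V]
    (A B : Submodule ℝ V) : ℝ :=
  sSup ((fun w => sInf ((fun v => ‖v - w‖ / ‖w‖) '' (B : Set V)))
    '' {w : V | w ∈ A ∧ w ≠ 0})

theorem bddBelow_image_norm_sub_div {V : Type*} [SeminormedAddCommGroup V] (B : Set V) (w : V) :
    BddBelow ((fun v => ‖v - w‖ / ‖w‖) '' B) :=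
  ⟨0, by rintro _ ⟨v, -, rfl⟩; positivity⟩

section DirGap

variable {V : Type*} [NormedAddCommGroup V] [InnerProductSpace ℝ V]

theorem sInf_image_norm_sub_div_le_one (B : Submodule ℝ V) (w : V) :
    sInf ((fun v => ‖v - w‖ / ‖w‖) '' (B : Set V)) ≤ 1 :=
  (csInf_le (bddBelow_image_norm_sub_div _ w) ⟨0, B.zero_mem, rfl⟩).trans <| by
    simpa using div_self_le_one ‖w‖

theorem sInf_image_norm_sub_div_eq (B : Submodule ℝ V) [B.HasOrthogonalProjection] (w : V) :
    sInf ((fun v => ‖v - w‖ / ‖w‖) '' (B : Set V)) = ‖w - B.starProjection w‖ / ‖w‖ := by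
  refine IsLeast.csInf_eq ⟨⟨_, B.starProjection_apply_mem w, by simp [norm_sub_rev]⟩, ?_⟩
  rintro _ ⟨v, hv, rfl⟩
  have : ‖w - B.starProjection w‖ ≤ ‖w - v‖ := by
    rw [Submodule.starProjection_minimal]
    exact ciInf_le ⟨0, by rintro _ ⟨x, rfl⟩; positivity⟩ (⟨v, hv⟩ : B)
  simp only [norm_sub_rev v w]
  gcongr

theorem sInf_image_norm_sub_div_le_dirGap {A B : Submodule ℝ V} {w : V} (hw : w ∈ A) (hw0 : w ≠ 0) :
    sInf ((fun v => ‖v - w‖ / ‖w‖) '' (B : Set V)) ≤ dirGap A B :=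
  le_csSup ⟨1, by rintro _ ⟨w', -, rfl⟩; exact sInf_image_norm_sub_div_le_one B w'⟩
    ⟨w, ⟨hw, hw0⟩, rfl⟩

theorem dirGap_le {A B : Submodule ℝ V} {s : ℝ} (hs : 0 ≤ s)
    (h : ∀ w ∈ A, ∃ v ∈ B, ‖v - w‖ ≤ s * ‖w‖) : dirGap A B ≤ s := by
  refine Real.sSup_le ?_ hs
  rintro _ ⟨w, ⟨hw, hw0⟩, rfl⟩
  obtain ⟨v, hv, hvw⟩ := h w hw
  refine (csInf_le (bddBelow_image_norm_sub_div _ w) ⟨v, hv, rfl⟩).trans ?_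
  rwa [div_le_iff₀ (norm_pos_iff.mpr hw0)]

theorem dirGap_eq_of_norm_sub_starProjection {A B : Submodule ℝ V} [B.HasOrthogonalProjection]
    {s : ℝ} (hle : ∀ w ∈ A, ‖w - B.starProjection w‖ ≤ s * ‖w‖) {w₀ : V} (hw₀A : w₀ ∈ A)
    (hw₀ : w₀ ≠ 0) (heq : ‖w₀ - B.starProjection w₀‖ = s * ‖w₀‖) : dirGap A B = s := by
  have hw₀pos : 0 < ‖w₀‖ := norm_pos_iff.mpr hw₀
  have hs : 0 ≤ s := nonneg_of_mul_nonneg_left (heq ▸ norm_nonneg _) hw₀pos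
  refine le_antisymm (dirGap_le hs fun w hw => ⟨_, B.starProjection_apply_mem w, ?_⟩) ?_
  · rw [norm_sub_rev]
    exact hle w hw
  · have h := sInf_image_norm_sub_div_le_dirGap (B := B) hw₀A hw₀
    rwa [sInf_image_norm_sub_div_eq, heq, mul_div_cancel_right₀ _ hw₀pos.ne'] at h

end DirGap

section Pencil

variable {W : Type*} [NormedAddCommGroup W] [InnerProductSpace ℝ W] {ι : Type*} [Fintype ι]

theorem mulVec_eq_smul_mulVec_iff (b : Module.Basis ι ℝ W) (T : W →ₗ[ℝ] W) {G H : Matrix ι ι ℝ}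
    (hG : ∀ i j, G i j = ⟪b j, b i⟫) (hH : ∀ i j, H i j = ⟪T (b j), b i⟫) (x : ι → ℝ)
    (κ : ℝ) : H *ᵥ x = κ • G *ᵥ x ↔ T (b.equivFun.symm x) = κ • b.equivFun.symm x := by
  have hGx : ∀ i, (G *ᵥ x) i = ⟪b.equivFun.symm x, b i⟫ := fun i => by
    simp [Matrix.mulVec, dotProduct, hG, sum_inner, real_inner_smul_left, mul_comm]
  have hHx : ∀ i, (H *ᵥ x) i = ⟪T (b.equivFun.symm x), b i⟫ := fun i => by
    simp [Matrix.mulVec, dotProduct, hH, sum_inner, real_inner_smul_left, mul_comm]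
  simp only [funext_iff, Pi.smul_apply, smul_eq_mul, hGx, hHx, ← real_inner_smul_left]
  exact ⟨InnerProductSpace.ext_inner_right_basis b, fun h i => by rw [h]⟩

theorem exists_mulVec_eq_smul_mulVec_iff (b : Module.Basis ι ℝ W) (T : W →ₗ[ℝ] W)
    {G H : Matrix ι ι ℝ} (hG : ∀ i j, G i j = ⟪b j, b i⟫)
    (hH : ∀ i j, H i j = ⟪T (b j), b i⟫) (κ : ℝ) :
    (∃ x ≠ 0, H *ᵥ x = κ • G *ᵥ x) ↔ ∃ v ≠ 0, T v = κ • v := by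
  constructor
  · rintro ⟨x, hx, hHG⟩
    exact ⟨b.equivFun.symm x, b.equivFun.symm.map_ne_zero_iff.mpr hx,
      (mulVec_eq_smul_mulVec_iff b T hG hH x κ).1 hHG⟩
  · rintro ⟨v, hv, hTv⟩
    refine ⟨b.equivFun v, b.equivFun.map_ne_zero_iff.mpr hv,
      (mulVec_eq_smul_mulVec_iff b T hG hH _ κ).2 ?_⟩
    simpa using hTv

end Pencil

section Rayleigh

variable {W V : Type*} [NormedAddCommGroup W] [InnerProductSpace ℝ W] [FiniteDimensional ℝ W]
  [NormedAddCommGroup V] [InnerProductSpace ℝ V]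

theorem LinearMap.IsSymmetric.inner_le_mul_norm_sq_of_isGreatest {T : W →ₗ[ℝ] W}
    (hT : T.IsSymmetric) {μ : ℝ} (hμ : IsGreatest {κ | ∃ v ≠ 0, T v = κ • v} μ) (v : W) :
    ⟪T v, v⟫ ≤ μ * ‖v‖ ^ 2 := by
  obtain ⟨v₀, hv₀, -⟩ := hμ.1
  have : Nontrivial W := ⟨⟨v₀, 0, hv₀⟩⟩
  have hsup_le : ⨆ x : {x : W // x ≠ 0}, RCLike.re ⟪T x, x⟫ / ‖(x : W)‖ ^ 2 ≤ μ := by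
    obtain ⟨w, hw⟩ := hT.hasEigenvalue_iSup_of_finiteDimensional.exists_hasEigenvector
    exact hμ.2 ⟨w, hw.2, hw.apply_eq_smul⟩
  rcases eq_or_ne v 0 with rfl | hv
  · simp
  have hbdd : BddAbove (Set.range fun x : {x : W // x ≠ 0} =>
      RCLike.re ⟪T x, x⟫ / ‖(x : W)‖ ^ 2) :=
    ⟨‖T.toContinuousLinearMap‖, by
      rintro _ ⟨x, rfl⟩
      exact (le_abs_self _).trans (T.toContinuousLinearMap.rayleighQuotient_le_norm x)⟩
  have := (le_ciSup hbdd ⟨v, hv⟩).trans hsup_le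
  rwa [RCLike.re_to_real, div_le_iff₀ (by positivity)] at this

variable [FiniteDimensional ℝ V] (L : W →ₗ[ℝ] V)

theorem LinearMap.norm_sq_apply_eq_of_adjoint_comp_self_apply_eq {v : W} {κ : ℝ}
    (h : (L.adjoint ∘ₗ L) v = κ • v) : ‖L v‖ ^ 2 = κ * ‖v‖ ^ 2 := by
  rw [← real_inner_self_eq_norm_sq, ← real_inner_self_eq_norm_sq, ← real_inner_smul_left, ← h,
    LinearMap.comp_apply, LinearMap.adjoint_inner_left]

theorem LinearMap.norm_apply_le_sqrt_mul_of_isGreatest {μ : ℝ}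
    (hμ : IsGreatest {κ | ∃ v ≠ 0, (L.adjoint ∘ₗ L) v = κ • v} μ) (v : W) :
    ‖L v‖ ≤ √μ * ‖v‖ := by
  have h := L.isPositive_adjoint_comp_self.isSymmetric.inner_le_mul_norm_sq_of_isGreatest hμ v
  rw [LinearMap.comp_apply, LinearMap.adjoint_inner_left, real_inner_self_eq_norm_sq] at h
  rw [← Real.sqrt_sq (norm_nonneg (L v)), ← Real.sqrt_sq (norm_nonneg v), ← Real.sqrt_mul']
  · exact Real.sqrt_le_sqrt h
  · positivity

theorem LinearMap.exists_norm_apply_eq_sqrt_mul_of_isGreatest {μ : ℝ}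
    (hμ : IsGreatest {κ | ∃ v ≠ 0, (L.adjoint ∘ₗ L) v = κ • v} μ) :
    ∃ v ≠ 0, ‖L v‖ = √μ * ‖v‖ := by
  obtain ⟨v, hv, hLv⟩ := hμ.1
  refine ⟨v, hv, ?_⟩
  have h := L.norm_sq_apply_eq_of_adjoint_comp_self_apply_eq hLv
  have hμ0 : 0 ≤ μ := by
    have : 0 < ‖v‖ ^ 2 := by positivity
    nlinarith [sq_nonneg ‖L v‖]
  rw [← Real.sqrt_sq (norm_nonneg (L v)), h, Real.sqrt_mul hμ0, Real.sqrt_sq (norm_nonneg v)]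

end Rayleigh

section Projection

variable {V : Type*} [NormedAddCommGroup V] [InnerProductSpace ℝ V]

theorem exists_smul_norm_sub_le {u w : V} {s : ℝ} (huw : ⟪w - u, u⟫ = 0)
    (hw : ‖w - u‖ ≤ s * ‖w‖) : ∃ t : ℝ, ‖t • w - u‖ ≤ s * ‖u‖ := by
  have hpyth : ‖w‖ ^ 2 = ‖u‖ ^ 2 + ‖w - u‖ ^ 2 := by
    have h := norm_add_sq_real u (w - u)
    rw [add_sub_cancel, real_inner_comm, huw] at h
    linarith
  rcases eq_or_ne w 0 with rfl | hw0
  · have hu : ‖u‖ ^ 2 = 0 := by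
      rw [zero_sub, norm_neg, norm_zero] at hpyth
      linarith
    exact ⟨0, by simp_all⟩
  have hwpos : 0 < ‖w‖ := norm_pos_iff.mpr hw0
  refine ⟨‖u‖ ^ 2 / ‖w‖ ^ 2, ?_⟩
  have hinner : ⟪w, u⟫ = ‖u‖ ^ 2 := by
    rw [← real_inner_self_eq_norm_sq, ← sub_eq_zero, ← inner_sub_left, huw]
  -- the distance from `u` to the line `ℝ w` is `‖u‖ sin θ`, while `‖w - u‖ = ‖w‖ sin θ`
  have hdist : ‖(‖u‖ ^ 2 / ‖w‖ ^ 2) • w - u‖ * ‖w‖ = ‖u‖ * ‖w - u‖ := by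
    rw [← sq_eq_sq₀ (by positivity) (by positivity), mul_pow, mul_pow, norm_sub_sq_real,
      real_inner_smul_left, hinner, norm_smul, mul_pow, Real.norm_eq_abs, sq_abs]
    field_simp
    nlinarith [hpyth]
  have : ‖(‖u‖ ^ 2 / ‖w‖ ^ 2) • w - u‖ * ‖w‖ ≤ s * ‖u‖ * ‖w‖ := by
    rw [hdist, mul_assoc, mul_left_comm]
    exact mul_le_mul_of_nonneg_left hw (norm_nonneg u)
  exact le_of_mul_le_mul_right this hwpos

variable {E F : Submodule ℝ V} [FiniteDimensional ℝ E] [FiniteDimensional ℝ F] {s : ℝ}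

theorem exists_mem_starProjection_eq_of_finrank_eq
    (hdim : Module.finrank ℝ F = Module.finrank ℝ E) (hs : s < 1)
    (hF : ∀ w ∈ F, ‖w - E.starProjection w‖ ≤ s * ‖w‖) {u : V} (hu : u ∈ E) :
    ∃ w ∈ F, E.starProjection w = u := by
  let Φ : F →ₗ[ℝ] E := E.orthogonalProjectionOnto.toLinearMap ∘ₗ F.subtype
  have hΦ_apply (w : F) : (Φ w : V) = E.starProjection w := rfl
  have hΦ : Function.Injective Φ := by
    refine (injective_iff_map_eq_zero Φ).mpr fun w hw => ?_
    have hPw : E.starProjection w = 0 := by rw [← hΦ_apply, hw, ZeroMemClass.coe_zero]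
    have h := hF w w.2
    rw [hPw, sub_zero] at h
    have : ‖(w : V)‖ ≤ 0 := by nlinarith [norm_nonneg (w : V)]
    simpa using this
  obtain ⟨w, hw⟩ := (LinearMap.injective_iff_surjective_of_finrank_eq_finrank hdim).mp hΦ ⟨u, hu⟩
  exact ⟨w, w.2, by rw [← hΦ_apply, hw]⟩

theorem exists_mem_norm_sub_le_of_finrank_eq
    (hdim : Module.finrank ℝ F = Module.finrank ℝ E) (hs : s < 1)
    (hF : ∀ w ∈ F, ‖w - E.starProjection w‖ ≤ s * ‖w‖) {u : V} (hu : u ∈ E) :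
    ∃ v ∈ F, ‖v - u‖ ≤ s * ‖u‖ := by
  obtain ⟨w, hwF, rfl⟩ := exists_mem_starProjection_eq_of_finrank_eq hdim hs hF hu
  obtain ⟨t, ht⟩ := exists_smul_norm_sub_le
    (E.starProjection_inner_eq_zero w _ (E.starProjection_apply_mem w)) (hF w hwF)
  exact ⟨t • w, F.smul_mem t hwF, ht⟩

end Projection

/-- equation (4.2): for `r`-dimensional subspaces `E, Ê`, `S` the
orthogonal projection onto `E`, a basis `φ̂₁,…,φ̂ᵣ` of `Ê`, Gram matrices
`G_{ij} = ⟨φ̂ⱼ, φ̂ᵢ⟩` and `H_{ij} = ⟨(I−S)φ̂ⱼ, (I−S)φ̂ᵢ⟩`, and `λ_max(G⁻¹H)` the largest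
eigenvalue of the pencil `Hx = κGx`, if `λ_max(G⁻¹H) < 1` then
`gap(E,Ê) = √(λ_max(G⁻¹H))`. -/
theorem stmt_19 {V : Type*} [NormedAddCommGroup V] [InnerProductSpace ℝ V]
    [FiniteDimensional ℝ V]
    (r : ℕ) (E Ehat : Submodule ℝ V)
    (hdimE : Module.finrank ℝ E = r) (hdimEhat : Module.finrank ℝ Ehat = r)
    (S : V →ₗ[ℝ] V)
    (hS : S = E.subtype ∘ₗ E.orthogonalProjectionOnto.toLinearMap)
    (φ : Fin r → V) (hφli : LinearIndependent ℝ φ)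
    (hφspan : Submodule.span ℝ (Set.range φ) = Ehat)
    (G H : Matrix (Fin r) (Fin r) ℝ)
    (hG : ∀ i j, G i j = ⟪φ j, φ i⟫)
    (hH : ∀ i j, H i j = ⟪φ j - S (φ j), φ i - S (φ i)⟫)
    (lamMax : ℝ)
    (hlam : IsGreatest {κ : ℝ | ∃ x : Fin r → ℝ, x ≠ 0 ∧ H.mulVec x = κ • G.mulVec x}
      lamMax)
    (hlt : lamMax < 1) :
    max (dirGap Ehat E) (dirGap E Ehat) = Real.sqrt lamMax := by
  have hS_apply (w : V) : S w = E.starProjection w := by rw [hS]; rfl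
  subst hφspan
  let b := Module.Basis.span hφli
  let L := (LinearMap.id - S) ∘ₗ (Submodule.span ℝ (Set.range φ)).subtype
  have hGb : ∀ i j, G i j = ⟪b j, b i⟫ := by simp [hG, b, Module.Basis.span_apply]
  have hHb : ∀ i j, H i j = ⟪(L.adjoint ∘ₗ L) (b j), b i⟫ := by
    intro i j
    rw [hH, LinearMap.comp_apply, LinearMap.adjoint_inner_left]
    simp [L, b, Module.Basis.span_apply]
  have hμ : IsGreatest {κ | ∃ v ≠ 0, (L.adjoint ∘ₗ L) v = κ • v} lamMax := by
    simpa only [exists_mulVec_eq_smul_mulVec_iff b _ hGb hHb] using hlam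
  have hbound : ∀ w ∈ Submodule.span ℝ (Set.range φ), ‖w - E.starProjection w‖ ≤ √lamMax * ‖w‖ :=
    fun w hw => by simpa [L, hS_apply] using L.norm_apply_le_sqrt_mul_of_isGreatest hμ ⟨w, hw⟩
  obtain ⟨w₀, hw₀, hLw₀⟩ := L.exists_norm_apply_eq_sqrt_mul_of_isGreatest hμ
  have hgap₁ := dirGap_eq_of_norm_sub_starProjection hbound w₀.2 (by simpa using hw₀)
    (by simpa [L, hS_apply] using hLw₀)
  have hgap₂ : dirGap E (Submodule.span ℝ (Set.range φ)) ≤ √lamMax :=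
    dirGap_le (Real.sqrt_nonneg _) fun u hu => exists_mem_norm_sub_le_of_finrank_eq
      (hdimEhat.trans hdimE.symm) ((Real.sqrt_lt' one_pos).mpr (by simpa using hlt)) hbound hu
  rw [hgap₁, max_eq_left (hgap₁ ▸ hgap₂)]
end
end
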